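/- arXiv:1104.3774 — 7 statements merged into one kernel-verified Lean document; each statement's English description precedes it below -/
import Mathlib

section
/- Let L be a solvable Lie algebra over a field F, U a subalgebra of L, and S ∈ Ω(U,L) with S ≠ L. Then S equals the intersection of all maximal subalgebras of L that contain S. -/
open LieAlgebra

namespace Paper

variable {F : Type*} [Field F] {L : Type*} [LieRing L] [LieAlgebra F L]

/-- The interval `[U:L]` is complemented: every subalgebra containing `U`
has a complement over `U`. -/
def IsComplementedInterval (U : LieSubalgebra F L) : Prop :=
  ∀ S : LieSubalgebra F L, U ≤ S →
    ∃ T : LieSubalgebra F L, U ≤ T ∧ S ⊓ T = U ∧ S ⊔ T = ⊤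

/-- `Ω(U,L)`. -/
def Omega (U : LieSubalgebra F L) : Set (LieSubalgebra F L) :=
  {S | U ≤ S ∧ IsComplementedInterval S}

/-- `Ω(U,L)_min`, the inclusion-minimal elements. -/
def OmegaMin (U : LieSubalgebra F L) : Set (LieSubalgebra F L) :=
  {S | S ∈ Omega U ∧ ∀ T ∈ Omega U, T ≤ S → T = S}

/-- `φ(U,L)`, the intersection of all maximal subalgebras containing `U`. -/
def phi (U : LieSubalgebra F L) : LieSubalgebra F L :=
  sInf {M : LieSubalgebra F L | IsCoatom M ∧ U ≤ M}

/-- A subalgebra which is an ideal of `L`. -/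
def IsIdealSubalg (A : LieSubalgebra F L) : Prop :=
  ∀ x : L, ∀ a ∈ A, ⁅x, a⁆ ∈ A

/-- A minimal ideal of `L`. -/
def IsMinimalIdeal (A : LieSubalgebra F L) : Prop :=
  A ≠ ⊥ ∧ IsIdealSubalg A ∧
    ∀ B : LieSubalgebra F L, IsIdealSubalg B → B ≤ A → B = ⊥ ∨ B = A

/-- A chief series `0 = A 0 < A 1 < … < A n = L`. -/
def IsChiefSeries (A : ℕ → LieSubalgebra F L) (n : ℕ) : Prop :=
  A 0 = ⊥ ∧ A n = ⊤ ∧ (∀ i, IsIdealSubalg (A i)) ∧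
    ∀ i < n, A i < A (i + 1) ∧
      ∀ B : LieSubalgebra F L, IsIdealSubalg B → A i ≤ B → B ≤ A (i + 1) →
        B = A i ∨ B = A (i + 1)

/-- The chief factor `A/B` is `U`-Frattini. -/
def IsUFrattiniFactor (U B A : LieSubalgebra F L) : Prop :=
  A ≤ phi (U ⊔ B) ∨ U ⊔ B = ⊤

/-- `B` is a `U`-prefrattini subalgebra with respect to the series `A`. -/
def IsPrefrattiniWrt (U : LieSubalgebra F L) (A : ℕ → LieSubalgebra F L) (n : ℕ)
    (B : LieSubalgebra F L) : Prop :=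
  ∃ M : ℕ → LieSubalgebra F L,
    (∀ i < n, ¬ IsUFrattiniFactor U (A i) (A (i + 1)) →
      IsCoatom (M i) ∧ U ⊔ A i ≤ M i ∧ ¬ A (i + 1) ≤ M i) ∧
    B = ⨅ i ∈ {i | i < n ∧ ¬ IsUFrattiniFactor U (A i) (A (i + 1))}, M i

/-- `B` is a `U`-prefrattini subalgebra of `L` (with respect to some chief series). -/
def IsPrefrattini (U B : LieSubalgebra F L) : Prop :=
  ∃ (n : ℕ) (A : ℕ → LieSubalgebra F L), IsChiefSeries A n ∧ IsPrefrattiniWrt U A n B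

/-- The lower central series of an ideal `I` of `L` (computed inside `L`):
`idealLCS I k = I^{k+1}`. -/
def idealLCS (I : LieIdeal F L) : ℕ → LieIdeal F L
  | 0 => I
  | k + 1 => ⁅I, idealLCS I k⁆

/-- The nilpotent residual `L^∞`. -/
def nilpotentResidual (F : Type*) (L : Type*) [Field F] [LieRing L] [LieAlgebra F L] :
    LieIdeal F L :=
  ⨅ k, LieModule.lowerCentralSeries F L L k

/-- The exponential `exp (ad x)` truncated below `p` (all higher terms vanish when
`ad x` has nilpotency index at most `p`). -/
noncomputable def expAd (F : Type*) {L : Type*} [Field F] [LieRing L] [LieAlgebra F L]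
    (p : ℕ) (x : L) : L →ₗ[F] L :=
  ∑ r ∈ Finset.range p, (r.factorial : F)⁻¹ • ((LieAlgebra.ad F L x : Module.End F L) ^ r : Module.End F L)

/-- The quotient map `L → L ⧸ I` as a morphism of Lie algebras. -/
def quotLieHom (I : LieIdeal F L) : L →ₗ⁅F⁆ L ⧸ I :=
  { I.toSubmodule.mkQ with map_lie' := rfl }

end Paper

theorem eq_top_of_sInf_coatoms_sup_eq_top {α : Type*} [CompleteLattice α] [IsCoatomic α]
    {s t : α} (hst : s ≤ t) (hsup : sInf {m | IsCoatom m ∧ s ≤ m} ⊔ t = ⊤) : t = ⊤ := by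
  by_contra ht
  obtain ⟨m, hm, htm⟩ := (IsCoatomic.eq_top_or_exists_le_coatom t).resolve_left ht
  have hle : sInf {m | IsCoatom m ∧ s ≤ m} ≤ m := sInf_le ⟨hm, hst.trans htm⟩
  exact hm.1 (top_le_iff.mp (hsup ▸ sup_le hle htm))

theorem sInf_coatoms_eq_of_forall_exists_compl {α : Type*} [CompleteLattice α] [IsCoatomic α]
    {s : α} (h : ∀ x, s ≤ x → ∃ t, s ≤ t ∧ x ⊓ t = s ∧ x ⊔ t = ⊤) :
    sInf {m | IsCoatom m ∧ s ≤ m} = s := by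
  obtain ⟨t, hst, hinf, hsup⟩ :=
    h (sInf {m | IsCoatom m ∧ s ≤ m}) (le_sInf fun _ hm => hm.2)
  rwa [eq_top_of_sInf_coatoms_sup_eq_top hst hsup, inf_top_eq] at hinf

theorem stmt0_general {F : Type*} [Field F] {L : Type*} [LieRing L] [LieAlgebra F L]
    [FiniteDimensional F L]
    (U S : LieSubalgebra F L) (hS : S ∈ Paper.Omega U) :
    S = sInf {M : LieSubalgebra F L | IsCoatom M ∧ S ≤ M} :=
  (sInf_coatoms_eq_of_forall_exists_compl hS.2).symm

theorem stmt0 {F : Type*} [Field F] {L : Type*} [LieRing L] [LieAlgebra F L]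
    [LieAlgebra.IsSolvable L] [FiniteDimensional F L]
    (U S : LieSubalgebra F L) (hS : S ∈ Paper.Omega U) (hStop : S ≠ ⊤) :
    S = sInf {M : LieSubalgebra F L | IsCoatom M ∧ S ≤ M} :=
  stmt0_general U S hS
end

section
/- Let L be a solvable Lie algebra, U a subalgebra, I an ideal of L, and S ∈ Ω(U,L). Then S + I ∈ Ω(U,L). -/
open LieAlgebra

/-!
For `T ≥ S ⊔ I`, take a complement `T'` of `T` over `S`; then `T' ⊔ I` is a complement
of `T` over `S ⊔ I`. Joins with the ideal `I` are computed on the underlying subspaces, so the modular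
law of subspaces gives `T ⊓ (T' ⊔ I) = (T ⊓ T') ⊔ I = S ⊔ I`.
-/

namespace Paper

variable {F : Type*} [Field F] {L : Type*} [LieRing L] [LieAlgebra F L]

def supIdealSubalg (W I : LieSubalgebra F L) (hI : IsIdealSubalg I) : LieSubalgebra F L where
  toSubmodule := W.toSubmodule ⊔ I.toSubmodule
  lie_mem' {a b} ha hb := by
    obtain ⟨w₁, hw₁, i₁, hi₁, rfl⟩ := Submodule.mem_sup.1 ha
    obtain ⟨w₂, hw₂, i₂, hi₂, rfl⟩ := Submodule.mem_sup.1 hb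
    have hi : ⁅w₁, i₂⁆ + ⁅i₁, w₂ + i₂⁆ ∈ I.toSubmodule := by
      rw [← lie_skew i₁]
      exact add_mem (hI _ _ hi₂) (neg_mem (hI _ _ hi₁))
    have hsplit : ⁅w₁ + i₁, w₂ + i₂⁆ = ⁅w₁, w₂⁆ + (⁅w₁, i₂⁆ + ⁅i₁, w₂ + i₂⁆) := by
      simp only [lie_add, add_lie]
      abel
    rw [hsplit]
    exact Submodule.add_mem_sup (W.lie_mem hw₁ hw₂) hi

theorem toSubmodule_sup_of_isIdealSubalg (W : LieSubalgebra F L) {I : LieSubalgebra F L}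
    (hI : IsIdealSubalg I) :
    (W ⊔ I).toSubmodule = W.toSubmodule ⊔ I.toSubmodule := by
  refine le_antisymm ?_ (sup_le ?_ ?_)
  · exact (LieSubalgebra.toSubmodule_le_toSubmodule _ _).2
      (sup_le (c := supIdealSubalg W I hI) (fun _ ↦ Submodule.mem_sup_left)
        (fun _ ↦ Submodule.mem_sup_right))
  · exact (LieSubalgebra.toSubmodule_le_toSubmodule _ _).2 le_sup_left
  · exact (LieSubalgebra.toSubmodule_le_toSubmodule _ _).2 le_sup_right

theorem sup_inf_assoc_of_isIdealSubalg {I : LieSubalgebra F L} (hI : IsIdealSubalg I)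
    (J : LieSubalgebra F L) {K : LieSubalgebra F L} (hIK : I ≤ K) :
    (I ⊔ J) ⊓ K = I ⊔ J ⊓ K := by
  rw [← LieSubalgebra.toSubmodule_inj]
  simp only [LieSubalgebra.inf_toSubmodule, sup_comm I, toSubmodule_sup_of_isIdealSubalg _ hI]
  rw [sup_comm, sup_inf_assoc_of_le _ ((LieSubalgebra.toSubmodule_le_toSubmodule _ _).2 hIK),
    sup_comm]

theorem IsComplementedInterval.sup_of_isIdealSubalg {S I : LieSubalgebra F L}
    (hS : IsComplementedInterval S) (hI : IsIdealSubalg I) :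
    IsComplementedInterval (S ⊔ I) := by
  intro T hT
  obtain ⟨T', hST', hinf, hsup⟩ := hS T (le_sup_left.trans hT)
  refine ⟨T' ⊔ I, sup_le_sup_right hST' I, ?_, ?_⟩
  · rw [inf_comm, sup_comm, sup_inf_assoc_of_isIdealSubalg hI T' (le_sup_right.trans hT),
      inf_comm, hinf, sup_comm]
  · rw [← sup_assoc, hsup, top_sup_eq]

end Paper

theorem stmt1_general {F : Type*} [Field F] {L : Type*} [LieRing L] [LieAlgebra F L]
    (U I S : LieSubalgebra F L) (hI : Paper.IsIdealSubalg I) (hS : S ∈ Paper.Omega U) :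
    S ⊔ I ∈ Paper.Omega U :=
  ⟨hS.1.trans le_sup_left, hS.2.sup_of_isIdealSubalg hI⟩

theorem stmt1 {F : Type*} [Field F] {L : Type*} [LieRing L] [LieAlgebra F L]
    [LieAlgebra.IsSolvable L] [FiniteDimensional F L]
    (U I S : LieSubalgebra F L) (hI : Paper.IsIdealSubalg I) (hS : S ∈ Paper.Omega U) :
    S ⊔ I ∈ Paper.Omega U :=
  stmt1_general U I S hI hS
end

section
/- Let L be a solvable Lie algebra, A a minimal ideal of L, and M a complement of A in L (i.e., L = A ⊕ M as vector spaces with M a subalgebra) containing the subalgebra U. Then Ω(U,M) = {S ∈ Ω(U,L) : S ⊆ M}. -/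
open LieAlgebra

namespace Paper

variable {F : Type*} [Field F] {L : Type*} [LieRing L] [LieAlgebra F L]

/-- `Ω(U,M)`: the analogue of `Ω` computed inside the interval `[U:M]`. -/
def OmegaIn (U T : LieSubalgebra F L) : Set (LieSubalgebra F L) :=
  {S | U ≤ S ∧ S ≤ T ∧ ∀ B : LieSubalgebra F L, S ≤ B → B ≤ T →
    ∃ C : LieSubalgebra F L, S ≤ C ∧ C ≤ T ∧ B ⊓ C = S ∧ B ⊔ C = T}

end Paper

/-!
Since `A` is an ideal, the projection `π : L → M` along `A` is a Lie homomorphism fixing `M`,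
with `π⁻¹(B) = A ⊔ B` for `B ≤ M`. A complement `C` of `A ⊔ B` over `S` in `L` therefore
projects to a complement `π(C)` of `B` over `S` in `M`. Conversely, given `B ⊇ S` in `L`, take a
complement `C` of `π(B)` in `[S:M]`. The minimal ideal `A` of the solvable algebra `L` is
abelian, and `A ⊔ B ⊔ C = L`, so `A ⊓ (B ⊔ C)` is an ideal, hence `0` or `A`; accordingly
`A ⊔ C` or `C` is a complement of `B` over `S` in `L`.
-/

namespace Paper

open LieSubalgebra

variable {F : Type*} [Field F] {L : Type*} [LieRing L] [LieAlgebra F L]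

lemma _root_.LieIdeal.eq_bot_of_lie_self_eq [IsSolvable L] {I : LieIdeal F L} (h : ⁅I, I⁆ = I) :
    I = ⊥ := by
  obtain ⟨k, hk⟩ := IsSolvable.solvable (R := F) (L := L)
  have hD : ∀ n, derivedSeriesOfIdeal F L n I = I := fun n => by
    induction n with
    | zero => rfl
    | succ n ih => rw [derivedSeriesOfIdeal_succ, ih, h]
  rw [← le_bot_iff, ← hk, derivedSeries_def, ← hD k]
  exact derivedSeriesOfIdeal_mono le_top k

lemma _root_.Submodule.projection_apply_eq_of_sub_mem {E : Type*} [AddCommGroup E] [Module F E]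
    {p q : Submodule F E} (hpq : IsCompl p q) {x y : E} (hy : y ∈ p) (hxy : x - y ∈ q) :
    p.projection q hpq x = y := by
  rw [← sub_add_cancel x y, map_add, Submodule.projection_apply_of_mem_right hpq hxy,
    Submodule.projection_apply_of_mem_left hpq hy, zero_add]

namespace IsIdealSubalg

variable {A : LieSubalgebra F L} (hA : IsIdealSubalg A)
include hA

lemma lie_mem_left {a : L} (ha : a ∈ A) (x : L) : ⁅a, x⁆ ∈ A := by
  rw [← lie_skew]
  exact neg_mem (hA x a ha)

lemma lie_mem_toSubmodule_sup {B : LieSubalgebra F L} {x y : L}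
    (hx : x ∈ (A : Submodule F L) ⊔ B) (hy : y ∈ (A : Submodule F L) ⊔ B) :
    ⁅x, y⁆ ∈ (A : Submodule F L) ⊔ B := by
  obtain ⟨a, ha, b, hb, rfl⟩ := Submodule.mem_sup.1 hx
  obtain ⟨a', ha', b', hb', rfl⟩ := Submodule.mem_sup.1 hy
  have hexp : ⁅a + b, a' + b'⁆ = (⁅a, a' + b'⁆ + ⁅b, a'⁆) + ⁅b, b'⁆ := by
    simp only [add_lie, lie_add]; abel
  rw [hexp]
  exact Submodule.mem_sup.2 ⟨_, add_mem (hA.lie_mem_left ha _) (hA b a' ha'), _,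
    B.lie_mem hb hb', rfl⟩

lemma sup_toSubmodule (B : LieSubalgebra F L) :
    ((A ⊔ B : LieSubalgebra F L) : Submodule F L) = (A : Submodule F L) ⊔ B := by
  let N : LieSubalgebra F L :=
    { (A : Submodule F L) ⊔ B with lie_mem' := hA.lie_mem_toSubmodule_sup }
  refine le_antisymm ?_ (sup_le ?_ ?_)
  · exact (toSubmodule_le_toSubmodule _ N).2 <|
      sup_le (fun _ => Submodule.mem_sup_left) (fun _ => Submodule.mem_sup_right)
  · exact (toSubmodule_le_toSubmodule _ _).2 le_sup_left
  · exact (toSubmodule_le_toSubmodule _ _).2 le_sup_right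

lemma mem_sup {B : LieSubalgebra F L} {x : L} :
    x ∈ A ⊔ B ↔ ∃ a ∈ A, ∃ b ∈ B, a + b = x := by
  rw [← mem_toSubmodule, hA.sup_toSubmodule]
  exact Submodule.mem_sup

lemma inf_of_sup_eq_top (hab : ∀ a ∈ A, ∀ b ∈ A, ⁅a, b⁆ = 0) {D : LieSubalgebra F L}
    (hD : A ⊔ D = ⊤) : IsIdealSubalg (A ⊓ D) := by
  intro x v hv
  rw [mem_inf] at hv ⊢
  obtain ⟨a, ha, d, hd, rfl⟩ := hA.mem_sup.1 (hD ▸ mem_top x : x ∈ A ⊔ D)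
  rw [add_lie, hab a ha v hv.1, zero_add]
  exact ⟨hA d v hv.1, D.lie_mem hd hv.2⟩

end IsIdealSubalg

lemma IsMinimalIdeal.lie_eq_zero [IsSolvable L] {A : LieSubalgebra F L}
    (hA : IsMinimalIdeal A) {a b : L} (ha : a ∈ A) (hb : b ∈ A) : ⁅a, b⁆ = 0 := by
  obtain ⟨hne, hI, hmin⟩ := hA
  obtain ⟨I, hIA⟩ : ∃ I : LieIdeal F L, ∀ x, x ∈ I ↔ x ∈ A :=
    ⟨{ (A : Submodule F L) with lie_mem := fun {x _} hm => hI x _ hm }, fun _ => Iff.rfl⟩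
  have hideal : IsIdealSubalg (⁅I, I⁆ : LieIdeal F L).toLieSubalgebra :=
    fun _ _ hv => LieSubmodule.lie_mem _ hv
  have hle : (⁅I, I⁆ : LieIdeal F L).toLieSubalgebra ≤ A :=
    fun x hx => (hIA x).1 (LieSubmodule.lie_le_left I I hx)
  have hab : ⁅a, b⁆ ∈ (⁅I, I⁆ : LieIdeal F L).toLieSubalgebra :=
    LieSubmodule.lie_mem_lie ((hIA a).2 ha) ((hIA b).2 hb)
  rcases hmin _ hideal hle with h | h
  · rwa [h, mem_bot] at hab
  · have hII : ⁅I, I⁆ = I := by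
      ext x
      rw [← LieIdeal.mem_toLieSubalgebra, h, hIA]
    refine absurd ?_ hne
    ext x
    rw [mem_bot, ← hIA, LieIdeal.eq_bot_of_lie_self_eq hII, LieSubmodule.mem_bot]

namespace IsIdealSubalg

variable {A M : LieSubalgebra F L} (hA : IsIdealSubalg A) (hAM : IsCompl A M)
include hA hAM

lemma isCompl_toSubmodule : IsCompl (A : Submodule F L) M :=
  ⟨disjoint_toSubmodule.2 hAM.disjoint, codisjoint_iff.2 <| by
    rw [← hA.sup_toSubmodule, hAM.sup_eq_top, top_toSubmodule]⟩

lemma projection_lie (x y : L) :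
    (M : Submodule F L).projection A (hA.isCompl_toSubmodule hAM).symm ⁅x, y⁆ =
      ⁅(M : Submodule F L).projection A (hA.isCompl_toSubmodule hAM).symm x,
        (M : Submodule F L).projection A (hA.isCompl_toSubmodule hAM).symm y⁆ := by
  set π := (M : Submodule F L).projection A (hA.isCompl_toSubmodule hAM).symm
  refine Submodule.projection_apply_eq_of_sub_mem _
    (M.lie_mem (Submodule.projection_apply_mem _ x) (Submodule.projection_apply_mem _ y)) ?_
  have hx : x - π x ∈ A := Submodule.sub_projection_mem _ x
  have hy : y - π y ∈ A := Submodule.sub_projection_mem _ y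
  have hexp : ⁅x, y⁆ - ⁅π x, π y⁆ = ⁅x - π x, y⁆ + ⁅π x, y - π y⁆ := by
    simp only [sub_lie, lie_sub]; abel
  rw [hexp]
  exact add_mem (hA.lie_mem_left hx y) (hA (π x) _ hy)

noncomputable def proj : L →ₗ⁅F⁆ L :=
  { (M : Submodule F L).projection A (hA.isCompl_toSubmodule hAM).symm with
    map_lie' := hA.projection_lie hAM _ _ }

lemma proj_apply_mem (x : L) : hA.proj hAM x ∈ M :=
  Submodule.projection_apply_mem _ x

lemma proj_apply_of_mem {x : L} (hx : x ∈ M) : hA.proj hAM x = x :=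
  Submodule.projection_apply_of_mem_left _ hx

lemma proj_apply_eq_zero {a : L} (ha : a ∈ A) : hA.proj hAM a = 0 :=
  Submodule.projection_apply_of_mem_right _ ha

lemma sub_proj_apply_mem (x : L) : x - hA.proj hAM x ∈ A :=
  Submodule.sub_projection_mem _ x

lemma map_proj_le (B : LieSubalgebra F L) : B.map (hA.proj hAM) ≤ M := by
  intro x hx
  obtain ⟨y, -, rfl⟩ := (mem_map _ _ x).1 hx
  exact hA.proj_apply_mem hAM y

lemma map_proj_of_le {B : LieSubalgebra F L} (hB : B ≤ M) : B.map (hA.proj hAM) = B := by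
  ext x
  rw [mem_map]
  refine ⟨?_, fun hx => ⟨x, hx, hA.proj_apply_of_mem hAM (hB hx)⟩⟩
  rintro ⟨y, hy, rfl⟩
  rwa [hA.proj_apply_of_mem hAM (hB hy)]

lemma map_proj_top : (⊤ : LieSubalgebra F L).map (hA.proj hAM) = M :=
  le_antisymm (hA.map_proj_le hAM ⊤) <|
    (hA.map_proj_of_le hAM le_rfl).ge.trans ((gc_map_comap (f := hA.proj hAM)).monotone_l le_top)

lemma map_proj_self : A.map (hA.proj hAM) = ⊥ := by
  refine le_bot_iff.1 fun x hx => ?_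
  obtain ⟨a, ha, rfl⟩ := (mem_map _ _ x).1 hx
  rw [hA.proj_apply_eq_zero hAM ha]
  exact zero_mem _

lemma map_proj_le_sup (B : LieSubalgebra F L) : B.map (hA.proj hAM) ≤ A ⊔ B := by
  intro x hx
  obtain ⟨y, hy, rfl⟩ := (mem_map _ _ x).1 hx
  rw [show hA.proj hAM y = y - (y - hA.proj hAM y) by abel]
  exact sub_mem (le_sup_right (a := A) hy) (le_sup_left (b := B) (hA.sub_proj_apply_mem hAM y))

lemma comap_proj_of_le {B : LieSubalgebra F L} (hB : B ≤ M) :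
    B.comap (hA.proj hAM) = A ⊔ B := by
  refine le_antisymm (fun x hx => ?_) (sup_le (fun a ha => ?_) (fun b hb => ?_))
  · rw [← sub_add_cancel x (hA.proj hAM x)]
    exact add_mem (le_sup_left (b := B) (hA.sub_proj_apply_mem hAM x)) (le_sup_right (a := A) hx)
  · rw [mem_comap, hA.proj_apply_eq_zero hAM ha]
    exact zero_mem B
  · rwa [mem_comap, hA.proj_apply_of_mem hAM (hB hb)]

end IsIdealSubalg

variable {A M S : LieSubalgebra F L}

lemma IsComplementedInterval.exists_compl_le (hS : IsComplementedInterval S)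
    (hA : IsIdealSubalg A) (hAM : IsCompl A M) (hSM : S ≤ M) {B : LieSubalgebra F L}
    (hSB : S ≤ B) (hBM : B ≤ M) : ∃ C, S ≤ C ∧ C ≤ M ∧ B ⊓ C = S ∧ B ⊔ C = M := by
  obtain ⟨C, hSC, hinf, hsup⟩ := hS (A ⊔ B) (hSB.trans le_sup_right)
  set π := hA.proj hAM
  have hgc := gc_map_comap (f := π)
  have hSC' : S ≤ C.map π := hA.map_proj_of_le hAM hSM ▸ hgc.monotone_l hSC
  refine ⟨C.map π, hSC', hA.map_proj_le hAM C,
    le_antisymm (fun x hx => ?_) (le_inf hSB hSC'), ?_⟩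
  · obtain ⟨hxB, hxC⟩ := (mem_inf _ _ x).1 hx
    obtain ⟨c, hc, rfl⟩ := (mem_map _ _ x).1 hxC
    have hcS : c ∈ S := by
      rw [← hinf, mem_inf, ← hA.comap_proj_of_le hAM hBM]
      exact ⟨hxB, hc⟩
    rwa [hA.proj_apply_of_mem hAM (hSM hcS)]
  · rw [← hA.map_proj_top hAM, ← hsup, hgc.l_sup, hgc.l_sup, hA.map_proj_self hAM,
      hA.map_proj_of_le hAM hBM, bot_sup_eq]

lemma IsMinimalIdeal.isComplementedInterval [IsSolvable L] (hA : IsMinimalIdeal A)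
    (hAM : IsCompl A M) (hSM : S ≤ M)
    (hS : ∀ B, S ≤ B → B ≤ M → ∃ C, S ≤ C ∧ C ≤ M ∧ B ⊓ C = S ∧ B ⊔ C = M) :
    IsComplementedInterval S := by
  intro B hSB
  have hI := hA.2.1
  set π := hI.proj hAM
  obtain ⟨C, hSC, hCM, hinf, hsup⟩ := hS (B.map π)
    (hI.map_proj_of_le hAM hSM ▸ (gc_map_comap (f := π)).monotone_l hSB) (hI.map_proj_le hAM B)
  have htop : A ⊔ (B ⊔ C) = ⊤ := by
    refine top_le_iff.1 ?_
    rw [← hAM.sup_eq_top, ← hsup, ← sup_assoc, ← sup_assoc]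
    exact sup_le_sup_right (sup_le le_sup_left (hI.map_proj_le_sup hAM B)) C
  have hK : IsIdealSubalg (A ⊓ (B ⊔ C)) :=
    hI.inf_of_sup_eq_top (fun a ha b hb => hA.lie_eq_zero ha hb) htop
  rcases hA.2.2 _ hK inf_le_left with hK | hK
  · refine ⟨A ⊔ C, hSC.trans le_sup_right,
      le_antisymm (fun x hx => ?_) (le_inf hSB (hSC.trans le_sup_right)), by
        rw [sup_left_comm, htop]⟩
    obtain ⟨hxB, hxAC⟩ := (mem_inf _ _ x).1 hx
    have hπx : π x ∈ S := by
      rw [← hinf, mem_inf, mem_map]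
      exact ⟨⟨x, hxB, rfl⟩, (hI.comap_proj_of_le hAM hCM ▸ hxAC : x ∈ C.comap π)⟩
    have hdiff : x - π x ∈ A ⊓ (B ⊔ C) := (mem_inf _ _ _).2
      ⟨hI.sub_proj_apply_mem hAM x, le_sup_left (b := C) (sub_mem hxB (hSB hπx))⟩
    rw [hK, mem_bot, sub_eq_zero] at hdiff
    rwa [hdiff]
  · refine ⟨C, hSC, le_antisymm ?_ (le_inf hSB hSC), ?_⟩
    · refine (le_inf (fun x hx => ?_) inf_le_right).trans hinf.le
      obtain ⟨hxB, hxC⟩ := (mem_inf _ _ x).1 hx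
      exact (mem_map _ _ x).2 ⟨x, hxB, hI.proj_apply_of_mem hAM (hCM hxC)⟩
    · rw [← htop, sup_eq_right.2 (hK.ge.trans inf_le_right)]

end Paper

theorem stmt2_general {F : Type*} [Field F] {L : Type*} [LieRing L] [LieAlgebra F L]
    [LieAlgebra.IsSolvable L]
    (A M U : LieSubalgebra F L) (hA : Paper.IsMinimalIdeal A)
    (hcompl₁ : A ⊔ M = ⊤) (hcompl₂ : A ⊓ M = ⊥) :
    Paper.OmegaIn U M = {S | S ∈ Paper.Omega U ∧ S ≤ M} := by
  have hAM : IsCompl A M := ⟨disjoint_iff.2 hcompl₂, codisjoint_iff.2 hcompl₁⟩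
  ext S
  constructor
  · rintro ⟨hUS, hSM, hS⟩
    exact ⟨⟨hUS, hA.isComplementedInterval hAM hSM hS⟩, hSM⟩
  · rintro ⟨⟨hUS, hS⟩, hSM⟩
    exact ⟨hUS, hSM, fun B hSB hBM => hS.exists_compl_le hA.2.1 hAM hSM hSB hBM⟩

theorem stmt2 {F : Type*} [Field F] {L : Type*} [LieRing L] [LieAlgebra F L]
    [LieAlgebra.IsSolvable L] [FiniteDimensional F L]
    (A M U : LieSubalgebra F L) (hA : Paper.IsMinimalIdeal A)
    (hcompl₁ : A ⊔ M = ⊤) (hcompl₂ : A ⊓ M = ⊥) (hU : U ≤ M) :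
    Paper.OmegaIn U M = {S | S ∈ Paper.Omega U ∧ S ≤ M} :=
  stmt2_general A M U hA hcompl₁ hcompl₂
end

section
/- Let L be a solvable Lie algebra, A a minimal ideal of L, U a subalgebra, and S a minimal element of Ω(U,L) with A ⊄ S. Then there is a maximal subalgebra M of L containing S with A ⊄ M. -/
/-!
Let `C` be a complement of `S ⊔ A` in the interval `[S:L]`. Then `A ⊄ C` and `A ⊔ C = L`, so a
subalgebra `M ⊇ C` maximal with `A ⊄ M` is a maximal subalgebra: any larger subalgebra contains
both `A` and `C`.
-/

open LieAlgebra

theorem exists_isCoatom_le_not_le_of_sup_eq_top {α : Type*} [SemilatticeSup α] [OrderTop α]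
    [WellFoundedGT α] {a c : α} (hac : ¬ a ≤ c) (h : a ⊔ c = ⊤) :
    ∃ m, IsCoatom m ∧ c ≤ m ∧ ¬ a ≤ m := by
  obtain ⟨m, ⟨hcm, ham⟩, hmax⟩ :=
    wellFounded_gt.has_min {d | c ≤ d ∧ ¬ a ≤ d} ⟨c, le_rfl, hac⟩
  refine ⟨m, ⟨fun hm => ham (hm ▸ le_top), fun n hmn => ?_⟩, hcm, ham⟩
  have han : a ≤ n := not_not.mp fun han => hmax n ⟨hcm.trans hmn.le, han⟩ hmn
  exact top_le_iff.mp (h ▸ sup_le han (hcm.trans hmn.le))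

namespace Paper

variable {F : Type*} [Field F] {L : Type*} [LieRing L] [LieAlgebra F L]

theorem IsComplementedInterval.exists_ge_not_le_sup_eq_top {S : LieSubalgebra F L}
    (hS : IsComplementedInterval S) {A : LieSubalgebra F L} (hAS : ¬ A ≤ S) :
    ∃ C, S ≤ C ∧ ¬ A ≤ C ∧ A ⊔ C = ⊤ := by
  obtain ⟨C, hSC, hinf, hsup⟩ := hS (S ⊔ A) le_sup_left
  refine ⟨C, hSC, fun hAC => hAS ?_, ?_⟩
  · exact hinf ▸ le_inf le_sup_right hAC
  · rw [← hsup, sup_comm S A, sup_assoc, sup_eq_right.mpr hSC]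

end Paper

theorem stmt3_general {F : Type*} [Field F] {L : Type*} [LieRing L] [LieAlgebra F L]
    [FiniteDimensional F L]
    (A U S : LieSubalgebra F L)
    (hS : S ∈ Paper.OmegaMin U) (hAS : ¬ A ≤ S) :
    ∃ M : LieSubalgebra F L, IsCoatom M ∧ S ≤ M ∧ ¬ A ≤ M := by
  obtain ⟨C, hSC, hAC, hsup⟩ := hS.1.2.exists_ge_not_le_sup_eq_top hAS
  obtain ⟨M, hM, hCM, hAM⟩ := exists_isCoatom_le_not_le_of_sup_eq_top hAC hsup
  exact ⟨M, hM, hSC.trans hCM, hAM⟩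

theorem stmt3 {F : Type*} [Field F] {L : Type*} [LieRing L] [LieAlgebra F L]
    [LieAlgebra.IsSolvable L] [FiniteDimensional F L]
    (A U S : LieSubalgebra F L) (hA : Paper.IsMinimalIdeal A)
    (hS : S ∈ Paper.OmegaMin U) (hAS : ¬ A ≤ S) :
    ∃ M : LieSubalgebra F L, IsCoatom M ∧ S ≤ M ∧ ¬ A ≤ M :=
  stmt3_general A U S hS hAS
end

section
/- Let L be a solvable Lie algebra, A an ideal of L, U a subalgebra, and S ∈ Ω(U,L)_min. Then S + A ∈ Ω(U+A, L)_min. -/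
/-!
Since `L` is solvable, `A` is reached from `0` through chief factors `M ⋖ N` with
`⁅N, N⁆ ≤ M`, so it suffices to pass from `S ∈ Ω(U, L)_min` with `M ≤ S` to
`S + N ∈ Ω(U + N, L)_min`. For `P ⊇ M` with `P + N = L`, the abelian factor makes `N ∩ P`
an ideal, hence `N ∩ P = M` or `N ≤ P`. If `N ⊄ S` and `T ∈ Ω(U + N, L)` lies below `S + N`,
then `T = (T ∩ S) + N`, and `[T ∩ S : L]` is complemented: given `B ⊇ T ∩ S`, a complement
`C` of `B + N` over `T` either already complements `B` over `T ∩ S`, or `C ∩ K` does, where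
`K` complements `S + N` over `S` (so `N ∩ K = M`). Minimality of `S` then forces
`T ∩ S = S`, i.e. `T = S + N`.
-/

open LieAlgebra

namespace LieSubalgebra

variable {R : Type*} [CommRing R] {L : Type*} [LieRing L] [LieAlgebra R L]

theorem toSubmodule_sup_lieIdeal (K : LieSubalgebra R L) (I : LieIdeal R L) :
    (K ⊔ I).toSubmodule = K.toSubmodule ⊔ I.toSubmodule := by
  let K' : LieSubalgebra R L :=
    { toSubmodule := K.toSubmodule ⊔ I.toSubmodule
      lie_mem' := by
        intro _ _ hxa hyb
        obtain ⟨x, hx, a, ha, rfl⟩ := Submodule.mem_sup.mp hxa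
        obtain ⟨y, hy, b, hb, rfl⟩ := Submodule.mem_sup.mp hyb
        rw [lie_add, add_lie, add_assoc]
        exact Submodule.add_mem_sup (K.lie_mem hx hy)
          (add_mem (lie_mem_left R L I a y ha) (lie_mem_right R L I _ b hb)) }
  refine le_antisymm (?_ : K ⊔ I ≤ K') (sup_le ?_ ?_)
  · exact sup_le (fun x hx => Submodule.mem_sup_left hx) fun x hx => Submodule.mem_sup_right hx
  · exact fun x hx => (le_sup_left : K ≤ K ⊔ I) hx
  · exact fun x hx => (le_sup_right : (I : LieSubalgebra R L) ≤ K ⊔ I) hx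

theorem mem_sup_lieIdeal {K : LieSubalgebra R L} {I : LieIdeal R L} {z : L} :
    z ∈ K ⊔ I ↔ ∃ x ∈ K, ∃ a ∈ I, x + a = z := by
  rw [← mem_toSubmodule, toSubmodule_sup_lieIdeal, Submodule.mem_sup]
  rfl

theorem inf_sup_lieIdeal_assoc_of_le {Q : LieSubalgebra R L} (K : LieSubalgebra R L)
    {I : LieIdeal R L} (h : (I : LieSubalgebra R L) ≤ Q) : Q ⊓ K ⊔ I = Q ⊓ (K ⊔ I) := by
  refine le_antisymm (sup_le (inf_le_inf_left Q le_sup_left) (le_inf h le_sup_right)) ?_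
  rintro z ⟨hzQ, hzKI⟩
  obtain ⟨x, hx, a, ha, rfl⟩ := mem_sup_lieIdeal.mp hzKI
  have hxQ : x ∈ Q := by simpa using Q.sub_mem hzQ (h ha)
  exact mem_sup_lieIdeal.mpr ⟨x, ⟨hxQ, hx⟩, a, ha, rfl⟩

theorem sup_lieIdeal_inf_assoc_of_le {K Q : LieSubalgebra R L} (I : LieIdeal R L)
    (h : K ≤ Q) : K ⊔ ((I : LieSubalgebra R L) ⊓ Q) = (K ⊔ I) ⊓ Q := by
  refine le_antisymm (sup_le (le_inf le_sup_left h) (inf_le_inf_right Q le_sup_right)) ?_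
  rintro z ⟨hzKI, hzQ⟩
  obtain ⟨x, hx, a, ha, rfl⟩ := mem_sup_lieIdeal.mp hzKI
  have haQ : a ∈ Q := by simpa using Q.sub_mem hzQ (h hx)
  exact add_mem (le_sup_left (b := (I : LieSubalgebra R L) ⊓ Q) hx)
    (le_sup_right (a := K) ⟨ha, haQ⟩)

end LieSubalgebra

namespace LieIdeal

variable {R : Type*} [CommRing R] {L : Type*} [LieRing L] [LieAlgebra R L]

@[simp]
theorem toLieSubalgebra_le_toLieSubalgebra {I J : LieIdeal R L} :
    (I : LieSubalgebra R L) ≤ J ↔ I ≤ J :=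
  Iff.rfl

@[simp]
theorem bot_toLieSubalgebra : ((⊥ : LieIdeal R L) : LieSubalgebra R L) = ⊥ := by
  ext; simp

theorem lie_sup_le_sup_lie (I J : LieIdeal R L) : ⁅I ⊔ J, I ⊔ J⁆ ≤ I ⊔ ⁅J, J⁆ := by
  rw [LieSubmodule.sup_lie, LieSubmodule.lie_sup, LieSubmodule.lie_sup]
  refine sup_le (sup_le ?_ ?_) (sup_le ?_ le_sup_right) <;> refine le_sup_of_le_left ?_
  · exact LieSubmodule.lie_le_right I I
  · exact LieSubmodule.lie_le_left I J
  · exact LieSubmodule.lie_le_right I J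

theorem lie_le_of_covBy [IsSolvable L] {M N : LieIdeal R L} (h : M ⋖ N) :
    ⁅N, N⁆ ≤ M := by
  rcases h.eq_or_eq (le_sup_left : M ≤ M ⊔ ⁅N, N⁆)
    (sup_le h.le (LieSubmodule.lie_le_right N N)) with hM | hN
  · exact hM ▸ le_sup_right
  · -- then `N ≤ M ⊔ D^k L` for all `k`, while `D^k L = ⊥` for some `k`
    have hle : ∀ k, N ≤ M ⊔ derivedSeries R L k := by
      intro k
      induction k with
      | zero => exact le_sup_of_le_right le_top
      | succ k ih =>
        calc N = M ⊔ ⁅N, N⁆ := hN.symm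
          _ ≤ M ⊔ (M ⊔ ⁅derivedSeries R L k, derivedSeries R L k⁆) :=
            sup_le_sup_left ((LieSubmodule.mono_lie ih ih).trans (lie_sup_le_sup_lie _ _)) M
          _ = M ⊔ derivedSeries R L (k + 1) := by
            rw [← sup_assoc, sup_idem, derivedSeries_def, derivedSeries_def,
              derivedSeriesOfIdeal_succ]
    obtain ⟨k, hk⟩ := IsSolvable.solvable R L
    exact absurd (by simpa [hk] using hle k) h.lt.not_ge

theorem inf_eq_or_le_of_covBy {M N : LieIdeal R L} (h : M ⋖ N) (hab : ⁅N, N⁆ ≤ M)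
    {P : LieSubalgebra R L} (hMP : (M : LieSubalgebra R L) ≤ P)
    (hPN : P ⊔ N = ⊤) : (N : LieSubalgebra R L) ⊓ P = M ∨ (N : LieSubalgebra R L) ≤ P := by
  have hideal : ∀ x w : L, w ∈ (N : LieSubalgebra R L) ⊓ P →
      ⁅x, w⁆ ∈ (N : LieSubalgebra R L) ⊓ P := by
    rintro x w ⟨hwN, hwP⟩
    obtain ⟨p, hp, n, hn, rfl⟩ :=
      LieSubalgebra.mem_sup_lieIdeal.mp (hPN ▸ LieSubalgebra.mem_top x : x ∈ P ⊔ N)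
    have hnw : ⁅n, w⁆ ∈ M := hab (LieSubmodule.lie_mem_lie hn hwN)
    rw [add_lie]
    exact add_mem ⟨lie_mem_right R L N p w hwN, P.lie_mem hp hwP⟩ ⟨h.le hnw, hMP hnw⟩
  obtain ⟨J, hJ⟩ := (LieSubalgebra.exists_lieIdeal_coe_eq_iff R _).mpr hideal
  have hMJ : M ≤ J := by
    rw [← toLieSubalgebra_le_toLieSubalgebra, hJ]
    exact le_inf (toLieSubalgebra_le_toLieSubalgebra.mpr h.le) hMP
  have hJN : J ≤ N := by
    rw [← toLieSubalgebra_le_toLieSubalgebra, hJ]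
    exact inf_le_left
  rcases h.eq_or_eq hMJ hJN with rfl | rfl
  · exact .inl hJ.symm
  · exact .inr (hJ ▸ inf_le_right)

end LieIdeal

namespace Paper

variable {F : Type*} [Field F] {L : Type*} [LieRing L] [LieAlgebra F L]

theorem IsComplementedInterval.sup_lieIdeal {S : LieSubalgebra F L}
    (hS : IsComplementedInterval S) (I : LieIdeal F L) : IsComplementedInterval (S ⊔ I) := by
  intro B hB
  obtain ⟨C, hSC, hinf, hsup⟩ := hS B (le_sup_left.trans hB)
  refine ⟨C ⊔ I, sup_le_sup_right hSC I, ?_, ?_⟩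
  · rw [← LieSubalgebra.inf_sup_lieIdeal_assoc_of_le C (le_sup_right.trans hB), hinf]
  · rw [← sup_assoc, hsup, top_sup_eq]

theorem IsComplementedInterval.exists_inf_eq_of_covBy {M N : LieIdeal F L} (h : M ⋖ N)
    (hab : ⁅N, N⁆ ≤ M) {S : LieSubalgebra F L}
    (hS : IsComplementedInterval S) (hMS : (M : LieSubalgebra F L) ≤ S)
    (hNS : ¬ (N : LieSubalgebra F L) ≤ S) :
    ∃ K : LieSubalgebra F L, S ≤ K ∧ K ⊔ N = ⊤ ∧ (N : LieSubalgebra F L) ⊓ K = M := by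
  obtain ⟨K, hSK, hinf, hsup⟩ := hS (S ⊔ N) le_sup_left
  have hKN : K ⊔ N = ⊤ :=
    top_le_iff.mp (hsup ▸ sup_le (sup_le (hSK.trans le_sup_left) le_sup_right) le_sup_left)
  refine ⟨K, hSK, hKN, ?_⟩
  refine (LieIdeal.inf_eq_or_le_of_covBy h hab (hMS.trans hSK) hKN).resolve_right fun hNK => ?_
  exact hNS (hinf ▸ le_inf le_sup_right hNK)

theorem IsComplementedInterval.of_sup_covBy {M N : LieIdeal F L} (h : M ⋖ N)
    (hab : ⁅N, N⁆ ≤ M) {S D : LieSubalgebra F L}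
    (hS : IsComplementedInterval S) (hDN : IsComplementedInterval (D ⊔ N))
    (hNS : ¬ (N : LieSubalgebra F L) ≤ S) (hDS : D ≤ S) (hMD : (M : LieSubalgebra F L) ≤ D) :
    IsComplementedInterval D := by
  obtain ⟨K, hSK, hKN, hNK⟩ := hS.exists_inf_eq_of_covBy h hab (hMD.trans hDS) hNS
  have hDN_inf : ∀ Q, D ≤ Q → (N : LieSubalgebra F L) ⊓ Q ≤ D → (D ⊔ N) ⊓ Q = D :=
    fun Q hDQ hNQ => by
      rw [← LieSubalgebra.sup_lieIdeal_inf_assoc_of_le N hDQ, sup_eq_left.mpr hNQ]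
  intro B hDB
  obtain ⟨C, hDNC, hCinf, hCsup⟩ := hDN (B ⊔ N) (sup_le_sup_right hDB _)
  have hNC : (N : LieSubalgebra F L) ≤ C := le_sup_right.trans hDNC
  have hBC : B ⊔ C = ⊤ := by rwa [sup_assoc, sup_eq_right.mpr hNC] at hCsup
  have hBC_inf : B ⊓ C = (D ⊔ N) ⊓ B :=
    le_antisymm (le_inf (hCinf ▸ inf_le_inf_right C le_sup_left) inf_le_left)
      (le_inf inf_le_right (inf_le_left.trans hDNC))
  have hPN : B ⊔ C ⊓ K ⊔ N = ⊤ := by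
    rw [sup_assoc, LieSubalgebra.inf_sup_lieIdeal_assoc_of_le K hNC, hKN, inf_top_eq, hBC]
  rcases LieIdeal.inf_eq_or_le_of_covBy h hab (hMD.trans (hDB.trans le_sup_left)) hPN with
    hNP | hNP
  · refine ⟨C, le_sup_left.trans hDNC, ?_, hBC⟩
    rw [hBC_inf]
    exact hDN_inf B hDB ((inf_le_inf_left _ le_sup_left).trans (hNP.le.trans hMD))
  · refine ⟨C ⊓ K, le_inf (le_sup_left.trans hDNC) (hDS.trans hSK), ?_, ?_⟩
    · rw [← inf_assoc, hBC_inf, inf_assoc]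
      exact hDN_inf (B ⊓ K) (le_inf hDB (hDS.trans hSK))
        ((inf_le_inf_left _ inf_le_right).trans (hNK.le.trans hMD))
    · rwa [sup_eq_left.mpr hNP] at hPN

theorem sup_mem_omegaMin_of_covBy {M N : LieIdeal F L} (h : M ⋖ N) (hab : ⁅N, N⁆ ≤ M)
    {U S : LieSubalgebra F L} (hMS : (M : LieSubalgebra F L) ≤ S)
    (hS : S ∈ OmegaMin U) : S ⊔ N ∈ OmegaMin (U ⊔ N) := by
  refine ⟨⟨sup_le_sup_right hS.1.1 _, hS.1.2.sup_lieIdeal N⟩, fun T hT hTS => ?_⟩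
  have hUT : U ≤ T := le_sup_left.trans hT.1
  have hNT : (N : LieSubalgebra F L) ≤ T := le_sup_right.trans hT.1
  by_cases hNS : (N : LieSubalgebra F L) ≤ S
  · rw [sup_eq_left.mpr hNS] at hTS ⊢
    exact hS.2 T ⟨hUT, hT.2⟩ hTS
  · have hT_eq : T ⊓ S ⊔ N = T := by
      rw [LieSubalgebra.inf_sup_lieIdeal_assoc_of_le S hNT, inf_eq_left.mpr hTS]
    have hTS_compl : IsComplementedInterval (T ⊓ S) :=
      hS.1.2.of_sup_covBy h hab (by rw [hT_eq]; exact hT.2) hNS inf_le_right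
        (le_inf ((LieIdeal.toLieSubalgebra_le_toLieSubalgebra.mpr h.le).trans hNT) hMS)
    have hST : T ⊓ S = S := hS.2 _ ⟨le_inf hUT hS.1.1, hTS_compl⟩ inf_le_right
    exact le_antisymm hTS (sup_le (hST ▸ inf_le_left) hNT)

theorem sup_lieIdeal_mem_omegaMin [IsSolvable L] [FiniteDimensional F L]
    (A : LieIdeal F L) {U S : LieSubalgebra F L} (hS : S ∈ OmegaMin U) :
    S ⊔ A ∈ OmegaMin (U ⊔ A) := by
  have := LieSubmodule.wellFoundedLT_of_isArtinian F L L
  induction A using WellFoundedLT.induction generalizing U S with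
  | _ A ih =>
    rcases eq_bot_or_bot_lt A with rfl | hA
    · simpa using hS
    · obtain ⟨M, -, hMA⟩ := exists_le_covBy_of_lt hA
      have hMA_le : (M : LieSubalgebra F L) ≤ A :=
        LieIdeal.toLieSubalgebra_le_toLieSubalgebra.mpr hMA.le
      have := sup_mem_omegaMin_of_covBy hMA (LieIdeal.lie_le_of_covBy hMA) le_sup_right
        (ih M hMA.lt hS)
      rwa [sup_assoc, sup_assoc, sup_eq_right.mpr hMA_le] at this

end Paper

theorem stmt5 {F : Type*} [Field F] {L : Type*} [LieRing L] [LieAlgebra F L]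
    [LieAlgebra.IsSolvable L] [FiniteDimensional F L]
    (A U S : LieSubalgebra F L) (hA : Paper.IsIdealSubalg A)
    (hS : S ∈ Paper.OmegaMin U) :
    S ⊔ A ∈ Paper.OmegaMin (U ⊔ A) := by
  obtain ⟨I, rfl⟩ := (LieSubalgebra.exists_lieIdeal_coe_eq_iff F A).mpr hA
  exact Paper.sup_lieIdeal_mem_omegaMin I hS
end

section
/- Let L be a solvable Lie algebra with a fixed chief series, and let B be a U-prefrattini subalgebra of L. Then B covers every U-Frattini chief factor of the series (B + A_i = B + A_{i-1}) and avoids every non-U-Frattini chief factor (B ∩ A_i = B ∩ A_{i-1}). -/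
open LieAlgebra

/-!
Chief factors of a solvable Lie algebra are abelian, so if a maximal subalgebra `M` contains
`A i` but not `A (i + 1)`, then `M ∩ A (i + 1)` is an ideal, hence equal to `A i`. This gives
avoidance, and since `M + A (i + 1) = L` it also gives `codim M = dim (A (i + 1) / A i)`.
For covering, count the dimensions of `B + A j`: in total they grow by
`codim B ≤ ∑ codim M_i` (over the non-`U`-Frattini steps), and at each non-`U`-Frattini step
they already grow by `codim M_i`, because `B` avoids that factor. So they cannot grow at a
`U`-Frattini step, i.e. `B + A (i + 1) = B + A i` there.
-/

open Module

theorem Finset.eq_zero_of_sum_le_sum_of_le {ι M : Type*} [AddCommGroup M] [PartialOrder M]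
    [IsOrderedAddMonoid M] [DecidableEq ι] {s t : Finset ι} (hts : t ⊆ s) {c d : ι → M}
    (hd : ∀ i ∈ s, 0 ≤ d i) (hcd : ∀ i ∈ t, c i ≤ d i)
    (hsum : ∑ i ∈ s, d i ≤ ∑ i ∈ t, c i) :
    ∀ i ∈ s \ t, d i = 0 := by
  have hnonneg : ∀ i ∈ s \ t, 0 ≤ d i := fun i hi => hd i (Finset.sdiff_subset hi)
  have hle : ∑ i ∈ s \ t, d i ≤ 0 := by
    rw [← add_le_iff_nonpos_left, Finset.sum_sdiff hts]
    exact hsum.trans (Finset.sum_le_sum hcd)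
  exact (Finset.sum_eq_zero_iff_of_nonneg hnonneg).1 (le_antisymm hle (Finset.sum_nonneg hnonneg))

theorem Submodule.finrank_sub_finrank_biInf_le {K V ι : Type*} [DivisionRing K] [AddCommGroup V]
    [Module K V] [FiniteDimensional K V] (p : ι → Submodule K V) (t : Finset ι) :
    (finrank K V : ℤ) - finrank K ↥(⨅ i ∈ t, p i) ≤
      ∑ i ∈ t, ((finrank K V : ℤ) - finrank K (p i)) := by
  classical
  induction t using Finset.induction with
  | empty =>
    rw [Finset.sum_empty, show ⨅ i ∈ (∅ : Finset ι), p i = ⊤ by simp, finrank_top,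
      sub_self]
  | insert a t ha ih =>
    rw [Finset.sum_insert ha, Finset.iInf_insert]
    have h := Submodule.finrank_sup_add_finrank_inf_eq (p a) (⨅ i ∈ t, p i)
    have hle := Submodule.finrank_le (p a ⊔ ⨅ i ∈ t, p i)
    omega

theorem Submodule.finrank_sup_add_finrank_le_of_sup_eq_top {K V : Type*} [DivisionRing K]
    [AddCommGroup V] [Module K V] [FiniteDimensional K V] {B M X Y : Submodule K V}
    (hYX : Y ≤ X) (hYM : Y ≤ M) (hMX : M ⊔ X = ⊤) (hBX : B ⊓ X ≤ Y) :
    finrank K ↥(B ⊔ Y) + finrank K V ≤ finrank K ↥(B ⊔ X) + finrank K M := by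
  have hsup : B ⊔ Y ⊔ X = B ⊔ X := by rw [sup_assoc, sup_eq_right.2 hYX]
  have hinf : (B ⊔ Y) ⊓ X = Y := by rw [sup_comm, sup_inf_assoc_of_le B hYX, sup_eq_left.2 hBX]
  have h1 := Submodule.finrank_sup_add_finrank_inf_eq (B ⊔ Y) X
  rw [hsup, hinf] at h1
  have h2 := Submodule.finrank_sup_add_finrank_inf_eq M X
  rw [hMX, finrank_top] at h2
  have h3 := Submodule.finrank_mono (le_inf hYM hYX)
  omega

theorem LieIdeal.le_of_le_sup_lie_self {R L : Type*} [CommRing R] [LieRing L] [LieAlgebra R L]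
    [IsSolvable L] {I J : LieIdeal R L} (h : J ≤ I ⊔ ⁅J, J⁆) : J ≤ I := by
  have key : ∀ k, J ≤ I ⊔ derivedSeriesOfIdeal R L k J := by
    intro k
    induction k with
    | zero => exact le_sup_right
    | succ k ih =>
      have hlie (D : LieIdeal R L) : ⁅I ⊔ D, I ⊔ D⁆ ≤ I ⊔ ⁅D, D⁆ := by
        rw [LieSubmodule.sup_lie, LieSubmodule.lie_sup I D D]
        exact sup_le ((LieSubmodule.lie_le_left I _).trans le_sup_left) <|
          sup_le ((LieSubmodule.lie_le_right I D).trans le_sup_left) le_sup_right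
      calc J ≤ I ⊔ ⁅J, J⁆ := h
        _ ≤ I ⊔ ⁅I ⊔ _, I ⊔ _⁆ := sup_le_sup_left (LieSubmodule.mono_lie ih ih) _
        _ ≤ I ⊔ derivedSeriesOfIdeal R L (k + 1) J := by
          rw [derivedSeriesOfIdeal_succ]
          exact sup_le le_sup_left (hlie _)
  obtain ⟨k, hk⟩ := IsSolvable.solvable R L
  have hbot : derivedSeriesOfIdeal R L k J = ⊥ :=
    eq_bot_iff.2 (hk ▸ derivedSeriesOfIdeal_le le_top le_rfl)
  simpa [hbot] using key k

namespace LieSubalgebra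

variable {R L : Type*} [CommRing R] [LieRing L] [LieAlgebra R L]

theorem iInf_toSubmodule {ι : Sort*} (K : ι → LieSubalgebra R L) :
    ((⨅ i, K i : LieSubalgebra R L) : Submodule R L) = ⨅ i, (K i : Submodule R L) := by
  rw [iInf, sInf_toSubmodule, iInf]
  congr 1
  ext
  simp

theorem toSubmodule_sup_of_lie_mem (K J : LieSubalgebra R L)
    (hJ : ∀ x y : L, y ∈ J → ⁅x, y⁆ ∈ J) :
    ((K ⊔ J : LieSubalgebra R L) : Submodule R L) =
      (K : Submodule R L) ⊔ (J : Submodule R L) := by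
  let S : LieSubalgebra R L :=
    { toSubmodule := (K : Submodule R L) ⊔ (J : Submodule R L)
      lie_mem' := by
        intro x y hx hy
        obtain ⟨k, hk, a, ha, rfl⟩ := Submodule.mem_sup.1 hx
        obtain ⟨k', hk', a', ha', rfl⟩ := Submodule.mem_sup.1 hy
        rw [add_lie, lie_add, add_assoc, ← lie_skew a (k' + a')]
        exact Submodule.add_mem_sup (K.lie_mem hk hk')
          (J.add_mem (hJ _ _ ha') (J.neg_mem (hJ _ _ ha))) }
  refine le_antisymm (sup_le (fun x hx => ?_) (fun x hx => ?_) : K ⊔ J ≤ S) ?_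
  · exact Submodule.mem_sup_left hx
  · exact Submodule.mem_sup_right hx
  · exact sup_le (fun x hx => le_sup_left (b := J) hx) (fun x hx => le_sup_right (a := K) hx)

theorem sup_eq_sup_of_finrank_le {F L : Type*} [Field F] [LieRing L] [LieAlgebra F L]
    [FiniteDimensional F L] {B X Y : LieSubalgebra F L} (hYX : Y ≤ X)
    (h : finrank F ↥((B : Submodule F L) ⊔ X) ≤ finrank F ↥((B : Submodule F L) ⊔ Y)) :
    B ⊔ X = B ⊔ Y := by
  have hsub : (B : Submodule F L) ⊔ Y = (B : Submodule F L) ⊔ X :=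
    Submodule.eq_of_le_of_finrank_le
      (sup_le_sup_left ((toSubmodule_le_toSubmodule _ _).2 hYX) _) h
  refine le_antisymm (sup_le le_sup_left fun x hx => ?_) (sup_le_sup_left hYX _)
  have hx' : x ∈ (B : Submodule F L) ⊔ Y := hsub ▸ Submodule.mem_sup_right hx
  exact (sup_le (fun z hz => le_sup_left (b := Y) hz) (fun z hz => le_sup_right (a := B) hz) :
    (B : Submodule F L) ⊔ Y ≤ (B ⊔ Y : LieSubalgebra F L)) hx'

end LieSubalgebra

namespace Paper.IsChiefSeries

variable {F L : Type*} [Field F] [LieRing L] [LieAlgebra F L]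
  {A : ℕ → LieSubalgebra F L} {n : ℕ}

theorem exists_lieIdeal_coe_eq (hA : IsChiefSeries A n) (i : ℕ) :
    ∃ I : LieIdeal F L, (I : LieSubalgebra F L) = A i :=
  (A i).exists_lieIdeal_coe_eq_iff.2 (hA.2.2.1 i)

theorem lie_mem_of_mem_succ [IsSolvable L] (hA : IsChiefSeries A n) {i : ℕ} (hi : i < n)
    {x y : L} (hx : x ∈ A (i + 1)) (hy : y ∈ A (i + 1)) : ⁅x, y⁆ ∈ A i := by
  obtain ⟨I, hI⟩ := hA.exists_lieIdeal_coe_eq i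
  obtain ⟨J, hJ⟩ := hA.exists_lieIdeal_coe_eq (i + 1)
  obtain ⟨hlt, hmin⟩ := hA.2.2.2 i hi
  rw [← hI, ← hJ] at hlt hmin
  rw [← hJ] at hx hy
  rw [← hI]
  have hIJ : I ≤ J := hlt.le
  let C : LieIdeal F L := I ⊔ ⁅J, J⁆
  rcases hmin C (fun z c hc => C.lie_mem hc) (le_sup_left (b := ⁅J, J⁆))
    (sup_le hIJ (LieSubmodule.lie_le_left J J)) with hC | hC
  · exact hC ▸ (Submodule.mem_sup_right (LieSubmodule.lie_mem_lie hx hy) : ⁅x, y⁆ ∈ C)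
  · have hJC : J ≤ I ⊔ ⁅J, J⁆ := fun z hz => (hC ▸ hz : z ∈ (C : LieSubalgebra F L))
    exact absurd (LieIdeal.le_of_le_sup_lie_self hJC) hlt.not_ge

theorem inf_succ_eq_of_isCoatom [IsSolvable L] (hA : IsChiefSeries A n) {i : ℕ} (hi : i < n)
    {M : LieSubalgebra F L} (hM : IsCoatom M) (hAM : A i ≤ M) (hAM' : ¬ A (i + 1) ≤ M) :
    M ⊓ A (i + 1) = A i := by
  obtain ⟨hlt, hmin⟩ := hA.2.2.2 i hi
  have hideal := hA.2.2.1 (i + 1)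
  set K := M ⊓ A (i + 1)
  have hnorm : M ⊔ A (i + 1) ≤ K.normalizer := by
    refine sup_le (fun m hm => (K.mem_normalizer_iff m).2 fun k hk => ?_)
      (fun a ha => (K.mem_normalizer_iff a).2 fun k hk => ?_)
    · exact ⟨M.lie_mem hm hk.1, hideal m k hk.2⟩
    · have hak := hA.lie_mem_of_mem_succ hi ha hk.2
      exact ⟨hAM hak, hlt.le hak⟩
  rw [hM.2 _ (left_lt_sup.2 hAM')] at hnorm
  rcases hmin K (fun x k hk => (K.mem_normalizer_iff x).1 (hnorm trivial) k hk)
    (le_inf hAM hlt.le) inf_le_right with h | h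
  · exact h
  · exact absurd (h ▸ inf_le_left) hAM'

theorem inf_succ_eq_inf_of_le [IsSolvable L] (hA : IsChiefSeries A n) {i : ℕ} (hi : i < n)
    {B M : LieSubalgebra F L} (hBM : B ≤ M) (hM : IsCoatom M) (hAM : A i ≤ M)
    (hAM' : ¬ A (i + 1) ≤ M) :
    B ⊓ A (i + 1) = B ⊓ A i := by
  refine le_antisymm (le_inf inf_le_left ?_) (inf_le_inf_left _ (hA.2.2.2 i hi).1.le)
  calc B ⊓ A (i + 1) ≤ M ⊓ A (i + 1) := inf_le_inf_right _ hBM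
    _ = A i := hA.inf_succ_eq_of_isCoatom hi hM hAM hAM'

theorem finrank_sub_finrank_le_of_le [IsSolvable L] [FiniteDimensional F L]
    (hA : IsChiefSeries A n) {i : ℕ} (hi : i < n)
    {B M : LieSubalgebra F L} (hBM : B ≤ M) (hM : IsCoatom M) (hAM : A i ≤ M)
    (hAM' : ¬ A (i + 1) ≤ M) :
    (finrank F L : ℤ) - finrank F (M : Submodule F L) ≤
      (finrank F ↥((B : Submodule F L) ⊔ A (i + 1)) : ℤ) -
        finrank F ↥((B : Submodule F L) ⊔ A i) := by
  have hMA : (M : Submodule F L) ⊔ A (i + 1) = ⊤ := by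
    rw [← LieSubalgebra.toSubmodule_sup_of_lie_mem _ _ (hA.2.2.1 (i + 1)),
      hM.2 _ (left_lt_sup.2 hAM'), LieSubalgebra.top_toSubmodule]
  have hBA : (B : Submodule F L) ⊓ A (i + 1) ≤ A i := by
    rw [← LieSubalgebra.inf_toSubmodule, hA.inf_succ_eq_inf_of_le hi hBM hM hAM hAM']
    exact inf_le_right
  have := Submodule.finrank_sup_add_finrank_le_of_sup_eq_top (hA.2.2.2 i hi).1.le hAM hMA hBA
  omega

theorem sup_succ_eq_sup_of_eq_iInf [IsSolvable L] [FiniteDimensional F L]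
    (hA : IsChiefSeries A n) {p : ℕ → Prop} {M : ℕ → LieSubalgebra F L}
    (hM : ∀ i < n, p i → IsCoatom (M i) ∧ A i ≤ M i ∧ ¬ A (i + 1) ≤ M i)
    {B : LieSubalgebra F L} (hB : B = ⨅ i ∈ {i | i < n ∧ p i}, M i) {i : ℕ} (hi : i < n)
    (hpi : ¬ p i) :
    B ⊔ A (i + 1) = B ⊔ A i := by
  classical
  let t := (Finset.range n).filter p
  have hBt : B = ⨅ j ∈ t, M j := by simp [hB, t]
  let r : ℕ → ℤ := fun j => finrank F ↥((B : Submodule F L) ⊔ A j)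
  have hr_mono : ∀ j ∈ Finset.range n, 0 ≤ r (j + 1) - r j := fun j hj =>
    sub_nonneg.2 <| Nat.cast_le.2 <| Submodule.finrank_mono <| sup_le_sup_left
      ((LieSubalgebra.toSubmodule_le_toSubmodule _ _).2 (hA.2.2.2 j (Finset.mem_range.1 hj)).1.le) _
  have hsum : ∑ j ∈ Finset.range n, (r (j + 1) - r j) =
      finrank F L - finrank F (B : Submodule F L) := by
    have h0 : (B : Submodule F L) ⊔ A 0 = B := by
      rw [hA.1, LieSubalgebra.bot_toSubmodule, sup_bot_eq]
    have hn : (B : Submodule F L) ⊔ A n = ⊤ := by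
      rw [hA.2.1, LieSubalgebra.top_toSubmodule, sup_top_eq]
    rw [Finset.sum_range_sub r n]
    dsimp only [r]
    rw [h0, hn, finrank_top]
  have hcodim : (finrank F L : ℤ) - finrank F (B : Submodule F L) ≤
      ∑ j ∈ t, ((finrank F L : ℤ) - finrank F (M j : Submodule F L)) := by
    have hBsub : (B : Submodule F L) = ⨅ j ∈ t, (M j : Submodule F L) := by
      simp only [hBt, LieSubalgebra.iInf_toSubmodule]
    rw [hBsub]
    exact Submodule.finrank_sub_finrank_biInf_le _ t
  have hcd : ∀ j ∈ t,
      (finrank F L : ℤ) - finrank F (M j : Submodule F L) ≤ r (j + 1) - r j := by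
    intro j hj
    obtain ⟨hj, hpj⟩ := Finset.mem_filter.1 hj
    obtain ⟨hMj, hAM, hAM'⟩ := hM j (Finset.mem_range.1 hj) hpj
    exact hA.finrank_sub_finrank_le_of_le (Finset.mem_range.1 hj)
      (hBt ▸ biInf_le M (Finset.mem_filter.2 ⟨hj, hpj⟩)) hMj hAM hAM'
  have hri := Finset.eq_zero_of_sum_le_sum_of_le (Finset.filter_subset p _) hr_mono hcd
    (hsum ▸ hcodim) i
    (Finset.mem_sdiff.2 ⟨Finset.mem_range.2 hi, fun h => hpi (Finset.mem_filter.1 h).2⟩)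
  exact LieSubalgebra.sup_eq_sup_of_finrank_le (hA.2.2.2 i hi).1.le
    (by simp only [r] at hri; omega)

end Paper.IsChiefSeries

theorem stmt10 {F : Type*} [Field F] {L : Type*} [LieRing L] [LieAlgebra F L]
    [LieAlgebra.IsSolvable L] [FiniteDimensional F L]
    (U : LieSubalgebra F L) (n : ℕ) (A : ℕ → LieSubalgebra F L)
    (hA : Paper.IsChiefSeries A n) (B : LieSubalgebra F L)
    (hB : Paper.IsPrefrattiniWrt U A n B) :
    ∀ i < n,
      (Paper.IsUFrattiniFactor U (A i) (A (i + 1)) → B ⊔ A (i + 1) = B ⊔ A i) ∧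
      (¬ Paper.IsUFrattiniFactor U (A i) (A (i + 1)) → B ⊓ A (i + 1) = B ⊓ A i) := by
  obtain ⟨M, hM, hBM⟩ := hB
  have hM' : ∀ i < n, ¬ Paper.IsUFrattiniFactor U (A i) (A (i + 1)) →
      IsCoatom (M i) ∧ A i ≤ M i ∧ ¬ A (i + 1) ≤ M i := fun i hi hi' =>
    let ⟨hMi, hUA, hAM⟩ := hM i hi hi'
    ⟨hMi, le_sup_right.trans hUA, hAM⟩
  intro i hi
  refine ⟨fun hi' => hA.sup_succ_eq_sup_of_eq_iInf hM' hBM hi (not_not_intro hi'),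
    fun hi' => ?_⟩
  obtain ⟨hMi, hAM, hAM'⟩ := hM' i hi hi'
  exact hA.inf_succ_eq_inf_of_le hi (hBM ▸ biInf_le M ⟨hi, hi'⟩) hMi hAM hAM'
end

section
/- Let L be a solvable Lie algebra and U a subalgebra. Every U-prefrattini subalgebra B of L belongs to Ω(U,L); that is, U ⊆ B and the interval [B:L] is complemented. -/
open LieAlgebra

/-!
Write `B = ⋂_{i ∈ I} M_i` and `B_j = ⋂_{i ∈ I, i ≥ j} M_i`, so `B_n = L` and `B_0 = B`; we show by
descending induction that every `[B_j : L]` is complemented. For `j ∈ I` put `N = A_{j+1}`: then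
`N ≤ B_{j+1}`, `N/A_j` is abelian because `L` is solvable, and `M_j + N = L`, so every element of
`B_{j+1}` is `m + a` with `m ∈ B_j`, `a ∈ N`. Given `S ⊇ B_j`, take a complement `T` of `S + N`
over `B_{j+1}`. Then `R = ⟨S, T ∩ M_j⟩` supplements `N`, so `R ∩ N` is an ideal of `L` between
`A_j` and `N`: if it is `A_j`, then `T` complements `S` over `B_j`; if it is `N`, then `T ∩ M_j`
does.
-/

section ChiefFactor

variable {F : Type*} [Field F] {L : Type*} [LieRing L] [LieAlgebra F L]

lemma LieIdeal.lie_le_of_chief [LieAlgebra.IsSolvable L] {K N : LieIdeal F L}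
    (hKN : K < N) (hchief : ∀ J : LieIdeal F L, K ≤ J → J ≤ N → J = K ∨ J = N) :
    ⁅N, N⁆ ≤ K := by
  rcases hchief _ le_sup_right (sup_le (LieSubmodule.lie_le_left N N) hKN.le) with h | h
  · exact h ▸ le_sup_left
  · have hN_le : ∀ k, N ≤ derivedSeries F L k ⊔ K := by
      intro k
      induction k with
      | zero => simp [derivedSeries_def]
      | succ k ih =>
        calc N = ⁅N, N⁆ ⊔ K := h.symm
          _ ≤ ⁅derivedSeries F L k ⊔ K, derivedSeries F L k ⊔ K⁆ ⊔ K :=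
            sup_le_sup_right (LieSubmodule.mono_lie ih ih) _
          _ ≤ derivedSeries F L (k + 1) ⊔ K := by
            simp only [LieSubmodule.lie_sup, LieSubmodule.sup_lie, derivedSeries_def,
              derivedSeriesOfIdeal_succ]
            exact sup_le (sup_le (sup_le le_sup_left
              (le_sup_of_le_right (LieSubmodule.lie_le_left _ _)))
              (sup_le (le_sup_of_le_right (LieSubmodule.lie_le_right _ _))
                (le_sup_of_le_right (LieSubmodule.lie_le_right _ _)))) le_sup_right
    obtain ⟨k, hk⟩ := LieAlgebra.IsSolvable.solvable (R := F) (L := L)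
    exact absurd (by simpa [hk] using hN_le k) hKN.not_ge

end ChiefFactor

section TailInf

variable {α : Type*} [CompleteLattice α] {I : Set ℕ} {j : ℕ} (M : ℕ → α)

lemma biInf_Ici_inter_of_mem (hj : j ∈ I) :
    ⨅ i ∈ Set.Ici j ∩ I, M i = (⨅ i ∈ Set.Ici (j + 1) ∩ I, M i) ⊓ M j := by
  have : Set.Ici j ∩ I = insert j (Set.Ici (j + 1) ∩ I) := by
    ext i
    simp only [Set.mem_inter_iff, Set.mem_Ici, Set.mem_insert_iff]
    grind
  rw [this, iInf_insert, inf_comm]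

lemma biInf_Ici_inter_of_notMem (hj : j ∉ I) :
    ⨅ i ∈ Set.Ici j ∩ I, M i = ⨅ i ∈ Set.Ici (j + 1) ∩ I, M i := by
  have : Set.Ici j ∩ I = Set.Ici (j + 1) ∩ I := by
    ext i
    simp only [Set.mem_inter_iff, Set.mem_Ici]
    grind
  rw [this]

end TailInf

namespace Paper

variable {F : Type*} [Field F] {L : Type*} [LieRing L] [LieAlgebra F L]

section IdealSup

variable {X N R S : LieSubalgebra F L}

lemma IsIdealSubalg.lie_mem_left_s12 (hN : IsIdealSubalg N) (x : L) {a : L} (ha : a ∈ N) :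
    ⁅a, x⁆ ∈ N := by
  rw [← lie_skew]
  exact neg_mem (hN x a ha)

lemma IsIdealSubalg.mem_sup_iff (hN : IsIdealSubalg N) {x : L} :
    x ∈ X ⊔ N ↔ ∃ y ∈ X, ∃ a ∈ N, y + a = x := by
  let P : LieSubalgebra F L :=
    { toSubmodule := X.toSubmodule ⊔ N.toSubmodule
      lie_mem' := by
        intro u v hu hv
        obtain ⟨y, hy, a, ha, rfl⟩ := Submodule.mem_sup.mp hu
        obtain ⟨z, hz, b, hb, rfl⟩ := Submodule.mem_sup.mp hv
        rw [add_lie, lie_add, add_assoc]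
        exact Submodule.add_mem_sup (X.lie_mem hy hz)
          (add_mem (hN y b hb) (hN.lie_mem_left_s12 _ ha)) }
  have hle : X ⊔ N ≤ P :=
    sup_le (fun y hy => Submodule.mem_sup_left hy) (fun a ha => Submodule.mem_sup_right ha)
  refine ⟨fun hx => Submodule.mem_sup.mp (hle hx), ?_⟩
  rintro ⟨y, hy, a, ha, rfl⟩
  exact add_mem (le_sup_left (b := N) hy) (le_sup_right (a := X) ha)

lemma IsIdealSubalg.sup_inf_assoc_of_le (hN : IsIdealSubalg N) (h : X ≤ S) :
    (X ⊔ N) ⊓ S = X ⊔ N ⊓ S := by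
  refine le_antisymm ?_ (le_inf (sup_le_sup_left inf_le_left _) (sup_le h inf_le_right))
  rintro x ⟨hx, hxS⟩
  obtain ⟨y, hy, a, ha, rfl⟩ := hN.mem_sup_iff.mp hx
  have haS : a ∈ S := by simpa using sub_mem hxS (h hy)
  exact add_mem (le_sup_left (b := N ⊓ S) hy) (le_sup_right (a := X) ⟨ha, haS⟩)

lemma IsIdealSubalg.inf_sup_assoc_of_le (hN : IsIdealSubalg N) (h : N ≤ S) :
    S ⊓ X ⊔ N = S ⊓ (X ⊔ N) := by
  refine le_antisymm (sup_le (inf_le_inf_left S le_sup_left) (le_inf h le_sup_right)) ?_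
  rintro x ⟨hxS, hx⟩
  obtain ⟨y, hy, a, ha, rfl⟩ := hN.mem_sup_iff.mp hx
  have hyS : y ∈ S := by simpa using sub_mem hxS (h ha)
  exact add_mem (le_sup_left (b := N) ⟨hyS, hy⟩) (le_sup_right (a := S ⊓ X) ha)

lemma IsIdealSubalg.inf_of_sup_eq_top_s12 (hN : IsIdealSubalg N) (hRN : R ⊔ N = ⊤)
    (hNN : ∀ a ∈ N, ∀ b ∈ N, ⁅a, b⁆ ∈ R) : IsIdealSubalg (R ⊓ N) := by
  rintro x c ⟨hcR, hcN⟩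
  obtain ⟨r, hr, a, ha, rfl⟩ := hN.mem_sup_iff.mp (hRN ▸ LieSubalgebra.mem_top x)
  rw [add_lie]
  exact add_mem ⟨R.lie_mem hr hcR, hN r c hcN⟩ ⟨hNN a ha c hcN, hN a c hcN⟩

end IdealSup

lemma isComplementedInterval_top : IsComplementedInterval (⊤ : LieSubalgebra F L) := by
  intro S hS
  exact ⟨⊤, le_rfl, by simp [top_le_iff.mp hS], by simp⟩

theorem IsComplementedInterval.inf_of_sup_eq_top_s12 {D M K N : LieSubalgebra F L}
    (hD : IsComplementedInterval D) (hN : IsIdealSubalg N) (hKN : K ≤ N)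
    (hchief : ∀ C, IsIdealSubalg C → K ≤ C → C ≤ N → C = K ∨ C = N)
    (hNN : ∀ a ∈ N, ∀ b ∈ N, ⁅a, b⁆ ∈ K) (hND : N ≤ D) (hKM : K ≤ M) (hMN : M ⊔ N = ⊤) :
    IsComplementedInterval (D ⊓ M) := by
  have hD_eq : D ⊓ M ⊔ N = D := by rw [hN.inf_sup_assoc_of_le hND, hMN, inf_top_eq]
  have hK : K ≤ D ⊓ M := le_inf (hKN.trans hND) hKM
  intro S hS
  obtain ⟨T, hDT, hSNT, hSNT_top⟩ := hD (S ⊔ N) (hD_eq ▸ sup_le_sup_right hS N)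
  have hNT : N ≤ T := hND.trans hDT
  have hST_top : S ⊔ T = ⊤ := by rwa [sup_assoc, sup_eq_right.mpr hNT] at hSNT_top
  have hST : S ⊓ T ≤ D := hSNT ▸ inf_le_inf_right T le_sup_left
  set R := S ⊔ T ⊓ M
  have hRN : R ⊔ N = ⊤ := by
    rw [eq_top_iff, ← hST_top, sup_assoc, hN.inf_sup_assoc_of_le hNT, hMN, inf_top_eq]
  have hKR : K ≤ R := hK.trans (hS.trans le_sup_left)
  rcases hchief (R ⊓ N) (hN.inf_of_sup_eq_top_s12 hRN fun a ha b hb => hKR (hNN a ha b hb))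
    (le_inf hKR hKN) inf_le_right with hRN_K | hRN_N
  · refine ⟨T, inf_le_left.trans hDT, le_antisymm ?_ (le_inf hS (inf_le_left.trans hDT)),
      hST_top⟩
    calc S ⊓ T ≤ (D ⊓ M ⊔ N) ⊓ S := by rw [hD_eq]; exact le_inf hST inf_le_left
      _ = D ⊓ M ⊔ N ⊓ S := hN.sup_inf_assoc_of_le hS
      _ ≤ D ⊓ M :=
        sup_le le_rfl <|
          (le_inf (inf_le_right.trans le_sup_left) inf_le_left).trans (hRN_K.le.trans hK)
  · refine ⟨T ⊓ M, inf_le_inf_right M hDT, le_antisymm ?_ (le_inf hS (inf_le_inf_right M hDT)),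
      by rwa [sup_eq_left.mpr (inf_eq_right.mp hRN_N)] at hRN⟩
    rw [← inf_assoc]
    exact inf_le_inf_right M hST

namespace IsChiefSeries

variable {A : ℕ → LieSubalgebra F L} {n : ℕ}

lemma mono (hA : IsChiefSeries A n) {i j : ℕ} (hij : i ≤ j) (hjn : j ≤ n) : A i ≤ A j := by
  induction j, hij using Nat.le_induction with
  | base => exact le_rfl
  | succ j _ ih => exact (ih (by omega)).trans (hA.2.2.2 j (by omega)).1.le

lemma lie_mem [LieAlgebra.IsSolvable L] (hA : IsChiefSeries A n) {j : ℕ} (hj : j < n)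
    {a b : L} (ha : a ∈ A (j + 1)) (hb : b ∈ A (j + 1)) : ⁅a, b⁆ ∈ A j := by
  obtain ⟨K, hK⟩ := (LieSubalgebra.exists_lieIdeal_coe_eq_iff F (A j)).mpr (hA.2.2.1 j)
  obtain ⟨N, hN⟩ :=
    (LieSubalgebra.exists_lieIdeal_coe_eq_iff F (A (j + 1))).mpr (hA.2.2.1 (j + 1))
  obtain ⟨hlt, hchief⟩ := hA.2.2.2 j hj
  rw [← hK, ← hN] at hlt hchief
  rw [← hN] at ha hb
  rw [← hK]
  refine LieIdeal.lie_le_of_chief hlt (fun J hKJ hJN => ?_) (LieSubmodule.lie_mem_lie ha hb)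
  refine (hchief J (fun x a ha => J.lie_mem ha) hKJ hJN).imp ?_ ?_ <;>
    exact fun h => SetLike.coe_injective (congrArg ((↑) : LieSubalgebra F L → Set L) h)

theorem isComplementedInterval_biInf [LieAlgebra.IsSolvable L] (hA : IsChiefSeries A n)
    {I : Set ℕ} {M : ℕ → LieSubalgebra F L} (hI : ∀ i ∈ I, i < n)
    (hM : ∀ i ∈ I, IsCoatom (M i) ∧ A i ≤ M i ∧ ¬ A (i + 1) ≤ M i) :
    IsComplementedInterval (⨅ i ∈ I, M i) := by
  suffices h : ∀ j ≤ n, IsComplementedInterval (⨅ i ∈ Set.Ici j ∩ I, M i) by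
    simpa using h 0 n.zero_le
  intro j hj
  induction hj using Nat.decreasingInduction with
  | self =>
    have hempty : Set.Ici n ∩ I = ∅ :=
      Set.eq_empty_of_forall_notMem fun i hi => (hI i hi.2).not_ge hi.1
    rw [hempty, iInf_emptyset]
    exact isComplementedInterval_top
  | of_succ j hjn ih =>
    by_cases hjI : j ∈ I
    · obtain ⟨hM_coatom, hAM, hAM_succ⟩ := hM j hjI
      rw [biInf_Ici_inter_of_mem M hjI]
      exact ih.inf_of_sup_eq_top_s12 (hA.2.2.1 (j + 1)) (hA.2.2.2 j hjn).1.le (hA.2.2.2 j hjn).2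
        (fun a ha b hb => hA.lie_mem hjn ha hb)
        (le_iInf₂ fun i hi => (hA.mono hi.1 (hI i hi.2).le).trans (hM i hi.2).2.1)
        hAM (codisjoint_iff.mp (hM_coatom.not_le_iff_codisjoint.mp hAM_succ))
    · rwa [biInf_Ici_inter_of_notMem M hjI]

end IsChiefSeries

end Paper

theorem stmt12_general {F : Type*} [Field F] {L : Type*} [LieRing L] [LieAlgebra F L]
    [LieAlgebra.IsSolvable L]
    (U : LieSubalgebra F L) (n : ℕ) (A : ℕ → LieSubalgebra F L)
    (hA : Paper.IsChiefSeries A n) (B : LieSubalgebra F L)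
    (hB : Paper.IsPrefrattiniWrt U A n B) :
    B ∈ Paper.Omega U := by
  obtain ⟨M, hM, rfl⟩ := hB
  refine ⟨le_iInf₂ fun i hi => le_sup_left.trans (hM i hi.1 hi.2).2.1, ?_⟩
  refine hA.isComplementedInterval_biInf (fun i hi => hi.1) fun i hi => ?_
  obtain ⟨hM_coatom, hUAM, hAM_succ⟩ := hM i hi.1 hi.2
  exact ⟨hM_coatom, le_sup_right.trans hUAM, hAM_succ⟩

theorem stmt12 {F : Type*} [Field F] {L : Type*} [LieRing L] [LieAlgebra F L]
    [LieAlgebra.IsSolvable L] [FiniteDimensional F L]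
    (U : LieSubalgebra F L) (n : ℕ) (A : ℕ → LieSubalgebra F L)
    (hA : Paper.IsChiefSeries A n) (B : LieSubalgebra F L)
    (hB : Paper.IsPrefrattiniWrt U A n B) :
    B ∈ Paper.Omega U :=
  stmt12_general U n A hA B hB
end
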